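/- Let N ≥ 1, let a > 0, let p : Fin N → ℝ with p(n) ≥ 0 for all n, let c : Fin N → ℝ with c(n) > 0 for all n, and let σ, τ be permutations of Fin N such that c ∘ τ is antitone. For a permutation ρ define R_ρ(n) = log₂(1 + a·p(n)/(a·∑_{j>n} p(j) + max_{i≥n} c(ρ(i)))). Then the sum rate satisfies ∑_{n} R_σ(n) ≤ ∑_{n} R_τ(n). -/

import Mathlib

/-!
The sum rate is compared position by position. Each rate is decreasing in the interference level
`max_{i ≥ n} c(ρ i)`, and sorting by decreasing `c` minimises it at every position at once: for the
sorted order it equals `c(τ n)`, while for any order `σ` the `n + 1` users `τ 0, …, τ n` cannot all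
avoid the `N - n` positions `≥ n` of `σ`, so one of them, whose `c` is at least `c(τ n)`, is decoded
at a position `≥ n`.
-/

/-- The achievable rate at decoding position `n` under decoding order `ρ`. -/
noncomputable def sicRate {N : ℕ} (a : ℝ) (p c : Fin N → ℝ)
    (ρ : Equiv.Perm (Fin N)) (n : Fin N) : ℝ :=
  Real.logb 2 (1 + a * p n /
    (a * ∑ j ∈ Finset.Ioi n, p j +
      (Finset.Ici n).sup' ⟨n, Finset.mem_Ici.mpr le_rfl⟩ (fun i => c (ρ i))))

open Finset

section

variable {N : ℕ} {α : Type*} [LinearOrder α]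

lemma exists_mem_Ici_apply_le_of_antitone_comp (f : Fin N → α) (σ τ : Equiv.Perm (Fin N))
    (hτ : Antitone (f ∘ τ)) (n : Fin N) : ∃ i ∈ Ici n, f (τ n) ≤ f (σ i) := by
  have hcard : #(univ : Finset (Fin N)) <
      #((Iic n).map τ.toEmbedding) + #((Ici n).map σ.toEmbedding) := by
    simp only [card_map, Fin.card_Iic, Fin.card_Ici, card_univ, Fintype.card_fin]
    omega
  obtain ⟨j, hj⟩ := inter_nonempty_of_card_lt_card_add_card (subset_univ _) (subset_univ _) hcard
  obtain ⟨⟨k, hk, rfl⟩, ⟨i, hi, hij⟩⟩ := And.imp mem_map.mp mem_map.mp (mem_inter.mp hj)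
  exact ⟨i, hi, hij ▸ hτ (mem_Iic.mp hk)⟩

lemma sup'_Ici_eq_of_antitone {g : Fin N → α} (hg : Antitone g) (n : Fin N) :
    (Ici n).sup' nonempty_Ici g = g n :=
  le_antisymm (sup'_le _ _ fun _ hi => hg (mem_Ici.mp hi)) (le_sup' g (mem_Ici.mpr le_rfl))

lemma sup'_Ici_le_sup'_Ici_of_antitone_comp (f : Fin N → α) (σ τ : Equiv.Perm (Fin N))
    (hτ : Antitone (f ∘ τ)) (n : Fin N) :
    (Ici n).sup' nonempty_Ici (f ∘ τ) ≤ (Ici n).sup' nonempty_Ici (f ∘ σ) := by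
  obtain ⟨i, hi, hle⟩ := exists_mem_Ici_apply_le_of_antitone_comp f σ τ hτ n
  rw [sup'_Ici_eq_of_antitone hτ]
  exact hle.trans (le_sup' (f ∘ σ) hi)

end

lemma logb_one_add_div_le_of_le {b x d d' : ℝ} (hb : 1 < b) (hx : 0 ≤ x) (hd : 0 < d)
    (hdd' : d ≤ d') : Real.logb b (1 + x / d') ≤ Real.logb b (1 + x / d) := by
  have hd' : 0 < d' := hd.trans_le hdd'
  apply Real.logb_le_logb_of_le hb (by positivity)
  gcongr

theorem optimal_sic_decoding_order_sum_rate_general (N : ℕ) (a : ℝ)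
    (ha : 0 < a) (p c : Fin N → ℝ) (hp : ∀ n, 0 ≤ p n) (hc : ∀ n, 0 < c n)
    (σ τ : Equiv.Perm (Fin N)) (hτ : Antitone (c ∘ ⇑τ)) :
    ∑ n, sicRate a p c σ n ≤ ∑ n, sicRate a p c τ n := by
  refine sum_le_sum fun n _ =>
    logb_one_add_div_le_of_le one_lt_two (mul_nonneg ha.le (hp n)) ?_ ?_
  · have hsum : 0 ≤ a * ∑ j ∈ Ioi n, p j := mul_nonneg ha.le (sum_nonneg fun j _ => hp j)
    have hinterference : 0 < (Ici n).sup' nonempty_Ici (c ∘ τ) :=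
      (hc (τ n)).trans_le (le_sup' (c ∘ τ) (mem_Ici.mpr le_rfl))
    exact add_pos_of_nonneg_of_pos hsum hinterference
  · exact add_le_add le_rfl (sup'_Ici_le_sup'_Ici_of_antitone_comp c σ τ hτ n)

/-- sum-rate form of Proposition 1: the decoding order sorted by
decreasing `c` maximizes the sum rate. -/
theorem optimal_sic_decoding_order_sum_rate (N : ℕ) (hN : 1 ≤ N) (a : ℝ)
    (ha : 0 < a) (p c : Fin N → ℝ) (hp : ∀ n, 0 ≤ p n) (hc : ∀ n, 0 < c n)
    (σ τ : Equiv.Perm (Fin N)) (hτ : Antitone (c ∘ ⇑τ)) :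
    ∑ n, sicRate a p c σ n ≤ ∑ n, sicRate a p c τ n :=
  optimal_sic_decoding_order_sum_rate_general N a ha p c hp hc σ τ hτ
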